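/- (Proposition 4.2(i), pointwise form.) Let c > 0 and η, τ ∈ ℝ with η² ≠ τ², let ν ∈ ℝ³ be a unit vector, and set η' := −4c²η/(η² − τ²) and τ' := −4c²τ/(η² − τ²). Then for all u, v ∈ ℂ⁴ the pair (u, v) satisfies the (η,τ)-jump condition if and only if the pair (u, −v) satisfies the (η', τ')-jump condition. -/
import Mathlib


open Matrix

noncomputable section

/-- The Pauli matrices. -/
def pauli : Fin 3 → Matrix (Fin 2) (Fin 2) ℂ
  | 0 => !![0, 1; 1, 0]
  | 1 => !![0, -Complex.I; Complex.I, 0]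
  | 2 => !![1, 0; 0, -1]

/-- The Dirac matrices α₁, α₂, α₃. -/
def diracAlpha (j : Fin 3) : Matrix (Fin 4) (Fin 4) ℂ :=
  Matrix.reindex finSumFinEquiv finSumFinEquiv (Matrix.fromBlocks 0 (pauli j) (pauli j) 0)

/-- The Dirac matrix β. -/
def diracBeta : Matrix (Fin 4) (Fin 4) ℂ :=
  Matrix.reindex finSumFinEquiv finSumFinEquiv ((Matrix.fromBlocks 1 0 0 (-1) : Matrix (Fin 2 ⊕ Fin 2) (Fin 2 ⊕ Fin 2) ℂ))

/-- The matrix γ₅. -/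
def gammaFive : Matrix (Fin 4) (Fin 4) ℂ :=
  Matrix.reindex finSumFinEquiv finSumFinEquiv ((Matrix.fromBlocks 0 1 1 0 : Matrix (Fin 2 ⊕ Fin 2) (Fin 2 ⊕ Fin 2) ℂ))

/-- α·x for x ∈ ℝ³. -/
def alphaDot (x : EuclideanSpace ℝ (Fin 3)) : Matrix (Fin 4) (Fin 4) ℂ :=
  ∑ j : Fin 3, (x j : ℂ) • diracAlpha j

/-- The (η,τ)-jump condition. -/
def JumpCond (c η τ : ℝ) (ν : EuclideanSpace ℝ (Fin 3)) (u v : Fin 4 → ℂ) : Prop :=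
  (Complex.I * (c : ℂ)) • ((alphaDot ν) *ᵥ (u - v)) +
    ((1 : ℂ) / 2) • ((((η : ℂ) • (1 : Matrix (Fin 4) (Fin 4) ℂ) + (τ : ℂ) • diracBeta)) *ᵥ (u + v)) = 0


lemma fsf0 : (finSumFinEquiv.symm (0 : Fin 4) : Fin 2 ⊕ Fin 2) = Sum.inl 0 := rfl
lemma fsf1 : (finSumFinEquiv.symm (1 : Fin 4) : Fin 2 ⊕ Fin 2) = Sum.inl 1 := rfl
lemma fsf2 : (finSumFinEquiv.symm (2 : Fin 4) : Fin 2 ⊕ Fin 2) = Sum.inr 0 := rfl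
lemma fsf3 : (finSumFinEquiv.symm (3 : Fin 4) : Fin 2 ⊕ Fin 2) = Sum.inr 1 := rfl

lemma diracBeta_eq : diracBeta = !![1,0,0,0; 0,1,0,0; 0,0,-1,0; 0,0,0,-1] := by
  ext i j
  fin_cases i <;> fin_cases j <;>
    simp [diracBeta, fsf0, fsf1, fsf2, fsf3, Matrix.vecHead, Matrix.vecTail]

lemma alphaDot_eq (ν : EuclideanSpace ℝ (Fin 3)) :
    alphaDot ν = !![0, 0, (ν 2 : ℂ), (ν 0 : ℂ) - Complex.I * (ν 1 : ℂ);
                    0, 0, (ν 0 : ℂ) + Complex.I * (ν 1 : ℂ), -(ν 2 : ℂ);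
                    (ν 2 : ℂ), (ν 0 : ℂ) - Complex.I * (ν 1 : ℂ), 0, 0;
                    (ν 0 : ℂ) + Complex.I * (ν 1 : ℂ), -(ν 2 : ℂ), 0, 0] := by
  ext i j
  fin_cases i <;> fin_cases j <;>
    simp [alphaDot, diracAlpha, pauli, Fin.sum_univ_three, fsf0, fsf1, fsf2, fsf3, Matrix.vecHead, Matrix.vecTail] <;> ring

lemma diracBeta_mul_self : diracBeta * diracBeta = 1 := by
  rw [diracBeta_eq]
  ext i j
  fin_cases i <;> fin_cases j <;>
    simp [Matrix.mul_apply, Fin.sum_univ_four, Matrix.one_apply, Matrix.vecHead, Matrix.vecTail]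

lemma alphaDot_mul_self (ν : EuclideanSpace ℝ (Fin 3)) (hν : ‖ν‖ = 1) :
    alphaDot ν * alphaDot ν = 1 := by
  have hsum : (ν 0 : ℂ) ^ 2 + (ν 1 : ℂ) ^ 2 + (ν 2 : ℂ) ^ 2 = 1 := by
    have := hν
    rw [EuclideanSpace.norm_eq] at this
    have h2 : ∑ i : Fin 3, ν i ^ 2 = 1 := by
      have : (∑ i : Fin 3, ν i ^ 2) = 1 ^ 2 := by
        rw [← this, Real.sq_sqrt (by positivity)]
        simp [sq_abs]
      simpa using this
    rw [Fin.sum_univ_three] at h2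
    exact_mod_cast congrArg (Complex.ofReal) h2
  rw [alphaDot_eq]
  ext i j
  fin_cases i <;> fin_cases j <;>
    simp [Matrix.mul_apply, Fin.sum_univ_four, Matrix.one_apply, Matrix.vecHead, Matrix.vecTail]
  all_goals first
    | ring1
    | linear_combination hsum - (ν 1 : ℂ) ^ 2 * Complex.I_sq
    | linear_combination (ν 1 : ℂ) ^ 2 * Complex.I_sq - hsum

lemma alphaDot_anticomm (ν : EuclideanSpace ℝ (Fin 3)) :
    alphaDot ν * diracBeta = -(diracBeta * alphaDot ν) := by
  rw [alphaDot_eq, diracBeta_eq]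
  ext i j
  fin_cases i <;> fin_cases j <;>
    simp [Matrix.mul_apply, Fin.sum_univ_four, Matrix.vecHead, Matrix.vecTail] <;> ring


lemma key_alg (P Q Qt : Matrix (Fin 4) (Fin 4) ℂ) (d e : ℂ) (he : e ≠ 0)
    (hPP : P * P = d • 1) (hPQ : P * Q = Qt * P) (hQQt : Q * Qt = e • 1)
    (a b : Fin 4 → ℂ) (H : P *ᵥ a + Q *ᵥ b = 0) :
    P *ᵥ b + ((d / e) • Q) *ᵥ a = 0 := by
  have h1 : P *ᵥ (P *ᵥ a) + P *ᵥ (Q *ᵥ b) = 0 := by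
    rw [← Matrix.mulVec_add, H, Matrix.mulVec_zero]
  rw [Matrix.mulVec_mulVec, Matrix.mulVec_mulVec, hPP, hPQ, ← Matrix.mulVec_mulVec,
    Matrix.smul_mulVec, Matrix.one_mulVec] at h1
  have h2 : Q *ᵥ (d • a) + Q *ᵥ (Qt *ᵥ (P *ᵥ b)) = 0 := by
    rw [← Matrix.mulVec_add, h1, Matrix.mulVec_zero]
  rw [Matrix.mulVec_mulVec, hQQt, Matrix.smul_mulVec, Matrix.one_mulVec,
    Matrix.mulVec_smul] at h2
  have h3 : e • (P *ᵥ b + ((d / e) • Q) *ᵥ a) = 0 := by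
    rw [Matrix.smul_mulVec, smul_add, smul_smul]
    have hde : e * (d / e) = d := by field_simp
    rw [hde]
    linear_combination (norm := module) h2
  rcases smul_eq_zero.mp h3 with h | h
  · exact absurd h he
  · exact h

lemma jump_imp (c η τ : ℝ) (hc : c ≠ 0) (hD : η ^ 2 - τ ^ 2 ≠ 0)
    (ν : EuclideanSpace ℝ (Fin 3)) (hν : ‖ν‖ = 1) (u v : Fin 4 → ℂ)
    (H : JumpCond c η τ ν u v) :
    JumpCond c (-4 * c ^ 2 * η / (η ^ 2 - τ ^ 2)) (-4 * c ^ 2 * τ / (η ^ 2 - τ ^ 2)) ν u (-v) := by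
  set M := alphaDot ν with hM
  set B := diracBeta with hB
  set P : Matrix (Fin 4) (Fin 4) ℂ := (Complex.I * (c : ℂ)) • M with hP
  set N : Matrix (Fin 4) (Fin 4) ℂ := (η : ℂ) • 1 + (τ : ℂ) • B with hN
  set Q : Matrix (Fin 4) (Fin 4) ℂ := ((1 : ℂ) / 2) • N with hQ
  set Qt : Matrix (Fin 4) (Fin 4) ℂ := ((1 : ℂ) / 2) • ((η : ℂ) • 1 + (-(τ : ℂ)) • B) with hQt
  set d : ℂ := -(c : ℂ) ^ 2 with hd
  set e : ℂ := (((η : ℂ)) ^ 2 - ((τ : ℂ)) ^ 2) / 4 with he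
  have hcC : (c : ℂ) ≠ 0 := by exact_mod_cast hc
  have hDC : ((η : ℂ)) ^ 2 - ((τ : ℂ)) ^ 2 ≠ 0 := by exact_mod_cast hD
  have heNe : e ≠ 0 := by
    rw [he]
    exact div_ne_zero hDC (by norm_num)
  have hMM : M * M = 1 := alphaDot_mul_self ν hν
  have hBB : B * B = 1 := diracBeta_mul_self
  have hMB : M * B = -(B * M) := alphaDot_anticomm ν
  have hPP : P * P = d • 1 := by
    rw [hP, Matrix.smul_mul, Matrix.mul_smul, hMM, smul_smul]
    congr 1
    rw [hd]
    linear_combination (c : ℂ) ^ 2 * Complex.I_sq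
  have hPQ : P * Q = Qt * P := by
    rw [hP, hQ, hQt, hN]
    simp only [Matrix.smul_mul, Matrix.mul_smul, Matrix.add_mul, Matrix.mul_add,
      Matrix.neg_mul, Matrix.mul_neg,
      Matrix.one_mul, Matrix.mul_one, hMB, smul_smul, smul_add, smul_neg, neg_smul]
    module
  have hQQt : Q * Qt = e • 1 := by
    rw [hQ, hQt, hN]
    simp only [Matrix.smul_mul, Matrix.mul_smul, Matrix.add_mul, Matrix.mul_add,
      Matrix.neg_mul, Matrix.mul_neg,
      Matrix.one_mul, Matrix.mul_one, hBB, smul_smul, smul_add, smul_neg, neg_smul]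
    rw [he]
    module
  rw [JumpCond, ← Matrix.smul_mulVec, ← Matrix.smul_mulVec] at H
  rw [JumpCond, ← Matrix.smul_mulVec, ← Matrix.smul_mulVec,
    sub_neg_eq_add, ← sub_eq_add_neg]
  have hkey := key_alg P Q Qt d e heNe hPP hPQ hQQt (u - v) (u + v) H
  have hN' : ((1 : ℂ) / 2) • (((-4 * c ^ 2 * η / (η ^ 2 - τ ^ 2) : ℝ) : ℂ) • (1 : Matrix (Fin 4) (Fin 4) ℂ) +
      ((-4 * c ^ 2 * τ / (η ^ 2 - τ ^ 2) : ℝ) : ℂ) • B) = (d / e) • Q := by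
    have hηc : (((-4 * c ^ 2 * η / (η ^ 2 - τ ^ 2) : ℝ) : ℂ)) = (d / e) * (η : ℂ) := by
      rw [hd, he]
      push_cast
      field_simp
    have hτc : (((-4 * c ^ 2 * τ / (η ^ 2 - τ ^ 2) : ℝ) : ℂ)) = (d / e) * (τ : ℂ) := by
      rw [hd, he]
      push_cast
      field_simp
    rw [hηc, hτc, hQ, hN]
    simp only [smul_add, smul_smul]
    module
  rw [hN']
  exact hkey


theorem jump_condition_strength_symmetry (c η τ : ℝ) (hc : 0 < c)
    (h : η ^ 2 ≠ τ ^ 2) (ν : EuclideanSpace ℝ (Fin 3)) (hν : ‖ν‖ = 1) :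
    ∀ u v : Fin 4 → ℂ, JumpCond c η τ ν u v ↔
      JumpCond c (-4 * c ^ 2 * η / (η ^ 2 - τ ^ 2)) (-4 * c ^ 2 * τ / (η ^ 2 - τ ^ 2)) ν u (-v) := by
  intro u v
  have hc' : c ≠ 0 := ne_of_gt hc
  have hD : η ^ 2 - τ ^ 2 ≠ 0 := sub_ne_zero.mpr h
  constructor
  · exact jump_imp c η τ hc' hD ν hν u v
  · intro H
    set η' := -4 * c ^ 2 * η / (η ^ 2 - τ ^ 2) with hη'
    set τ' := -4 * c ^ 2 * τ / (η ^ 2 - τ ^ 2) with hτ'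
    have hD'eq : η' ^ 2 - τ' ^ 2 = 16 * c ^ 4 / (η ^ 2 - τ ^ 2) := by
      rw [hη', hτ']
      field_simp
      ring
    have hD' : η' ^ 2 - τ' ^ 2 ≠ 0 := by
      rw [hD'eq]
      exact div_ne_zero (by positivity) hD
    have H2 := jump_imp c η' τ' hc' hD' ν hν u (-v) H
    have hη2 : -4 * c ^ 2 * η' / (η' ^ 2 - τ' ^ 2) = η := by
      rw [hD'eq, hη']
      field_simp
      ring
    have hτ2 : -4 * c ^ 2 * τ' / (η' ^ 2 - τ' ^ 2) = τ := by
      rw [hD'eq, hτ']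
      field_simp
      ring
    rw [hη2, hτ2, neg_neg] at H2
    exact H2


end
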